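/- With B^fmaj_{n,k}(q) as above, Σ_{k=0}^{n} B^fmaj_{n,k}(q)·z^k = Σ_{π∈B_n} q^{fmaj(π)} · Π_{i=1}^{des_B(π)} (1 + z/q^{2i-1}), as an identity in Z[q,q^{-1}][z]. -/

import Mathlib

open Finset LaurentPolynomial

/-- `[m]_q = 1 + q + ... + q^{m-1}`. -/
def qnat {R : Type*} [CommRing R] (q : R) (m : ℕ) : R := ∑ i ∈ Finset.range m, q ^ i

/-- The Gaussian binomial coefficient, as a polynomial expression in `q`. -/
def qbin {R : Type*} [CommRing R] (q : R) : ℕ → ℕ → R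
  | 0, 0 => 1
  | 0, _ + 1 => 0
  | _ + 1, 0 => 1
  | n + 1, k + 1 => qbin q n k + q ^ (k + 1) * qbin q n (k + 1)

/-- A signed permutation of `{1,...,n}`, encoded as an (unsigned) permutation together
with a sign for each position. -/
abbrev SignedPerm (n : ℕ) := Equiv.Perm (Fin n) × (Fin n → Bool)

/-- The value `π_i ∈ {±1,...,±n}` (1-indexed) of a signed permutation; `π_0 = 0`. -/
def spVal {n : ℕ} (π : SignedPerm n) (i : ℕ) : ℤ :=
  if h : 1 ≤ i ∧ i ≤ n then
    (if π.2 ⟨i - 1, by omega⟩ then -(((π.1 ⟨i - 1, by omega⟩ : Fin n) : ℤ) + 1)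
     else ((π.1 ⟨i - 1, by omega⟩ : Fin n) : ℤ) + 1)
  else 0

/-- The type B descent set `Des_B(π) = {i ∈ {0,...,n-1} : π_i > π_{i+1}}` (with `π_0 = 0`). -/
def desSetB {n : ℕ} (π : SignedPerm n) : Finset ℕ :=
  (Finset.range n).filter fun i => spVal π (i + 1) < spVal π i

/-- `neg(π)`, the number of negative entries of a signed permutation. -/
def negB {n : ℕ} (π : SignedPerm n) : ℕ :=
  ((Finset.range n).filter fun i => spVal π (i + 1) < 0).card

/-- The flag-major index `fmaj(π) = 2 Σ_{i ∈ Des_B(π)} i + neg(π)`. -/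
def fmajB {n : ℕ} (π : SignedPerm n) : ℕ := 2 * ∑ i ∈ desSetB π, i + negB π

/-- The statistic `fmaj(π,S) = fmaj(π) - Σ_{j ∈ S} (2 |Des_B(π) ∩ {j,...,n-1}| - 1)`
of a descent-starred signed permutation (as an integer). -/
def fmajStar {n : ℕ} (π : SignedPerm n) (S : Finset ℕ) : ℤ :=
  (fmajB π : ℤ) - ∑ j ∈ S, (2 * (((desSetB π).filter fun t => j ≤ t).card : ℤ) - 1)

/-- `B^fmaj_{n,k}(q) = Σ_{(π,S), S ⊆ Des_B(π), |S| = k} q^{fmaj(π,S)}`,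
as a Laurent polynomial in `q`. -/
noncomputable def BfmajPoly (n k : ℕ) : LaurentPolynomial ℤ :=
  ∑ π : SignedPerm n, ∑ S ∈ (desSetB π).powersetCard k, T (fmajStar π S)

/-- The number of type B descents. -/
def desB {n : ℕ} (π : SignedPerm n) : ℕ := (desSetB π).card

/-!
For a fixed `π` with descent set `D`, starring the descents in `S ⊆ D` lowers `fmaj` by
`2r - 1` for each `j ∈ S`, where `r` is the rank of `j` in `D` counted from the top. Summing over
all `S` factors as `∏_{j ∈ D} (1 + z q^{1 - 2r(j)})`, and since the ranks run through
`1, …, des_B(π)`, this is the product in the statement.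
-/

namespace Finset

variable {α : Type*}

theorem prod_card_filter_le_eq_prod_range {M : Type*} [LinearOrder α] [CommMonoid M]
    (s : Finset α) (g : ℕ → M) :
    ∏ j ∈ s, g #{t ∈ s | j ≤ t} = ∏ i ∈ range #s, g (i + 1) := by
  induction s using Finset.induction_on_min with
  | empty => simp
  | insert a s ha ih =>
    have ha' : a ∉ s := fun h => lt_irrefl a (ha a h)
    have hrank_a : #{t ∈ insert a s | a ≤ t} = #s + 1 := by
      rw [filter_true_of_mem fun t ht => ?_, card_insert_of_notMem ha']
      rcases mem_insert.1 ht with rfl | ht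
      exacts [le_rfl, (ha t ht).le]
    have hrank_s : ∀ j ∈ s, {t ∈ insert a s | j ≤ t} = {t ∈ s | j ≤ t} := fun j hj => by
      rw [filter_insert, if_neg (ha j hj).not_ge]
    rw [prod_insert ha', hrank_a, prod_congr rfl fun j hj => by rw [hrank_s j hj], ih,
      card_insert_of_notMem ha', prod_range_succ, mul_comm]

theorem sum_range_sum_powersetCard_of_card_le {β : Type*} [AddCommMonoid β] {s : Finset α}
    {n : ℕ} (hs : #s ≤ n) (f : ℕ → Finset α → β) :
    ∑ k ∈ range (n + 1), ∑ t ∈ powersetCard k s, f k t = ∑ t ∈ s.powerset, f #t t := by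
  calc _ = ∑ k ∈ range (#s + 1), ∑ t ∈ powersetCard k s, f k t := by
        refine (sum_subset (range_subset_range.2 (by omega)) fun k _ hk => ?_).symm
        rw [powersetCard_eq_empty.2 (by simpa using hk), sum_empty]
    _ = ∑ k ∈ range (#s + 1), ∑ t ∈ powersetCard k s, f #t t :=
        sum_congr rfl fun k _ => sum_congr rfl fun t ht => by rw [(mem_powersetCard.1 ht).2]
    _ = _ := (sum_powerset s _).symm

end Finset

namespace LaurentPolynomial

variable {R : Type*}

theorem T_sum [CommSemiring R] {ι : Type*} (s : Finset ι) (f : ι → ℤ) :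
    (T (∑ i ∈ s, f i) : R[T;T⁻¹]) = ∏ i ∈ s, T (f i) := by
  induction s using Finset.cons_induction with
  | empty => simp
  | cons a s ha ih => rw [sum_cons, prod_cons, T_add, ih]

theorem sum_powerset_C_T_mul_X_pow [CommSemiring R] {α : Type*} [LinearOrder α]
    (D : Finset α) (m : ℤ) :
    ∑ S ∈ D.powerset,
        Polynomial.C (T (m - ∑ j ∈ S, (2 * (#{t ∈ D | j ≤ t} : ℤ) - 1)) : R[T;T⁻¹]) *
          Polynomial.X ^ #S =
      Polynomial.C (T m : R[T;T⁻¹]) *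
        ∏ i ∈ range #D, (1 + Polynomial.C (T (-(2 * (i : ℤ) + 1)) : R[T;T⁻¹]) * Polynomial.X) := by
  set f : ℕ → Polynomial R[T;T⁻¹] := fun r => Polynomial.C (T (1 - 2 * (r : ℤ))) * Polynomial.X
  have hterm : ∀ S : Finset α,
      Polynomial.C (T (m - ∑ j ∈ S, (2 * (#{t ∈ D | j ≤ t} : ℤ) - 1)) : R[T;T⁻¹]) *
        Polynomial.X ^ #S = Polynomial.C (T m) * ∏ j ∈ S, f #{t ∈ D | j ≤ t} := fun S => by
    have hexp : m - ∑ j ∈ S, (2 * (#{t ∈ D | j ≤ t} : ℤ) - 1) =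
        m + ∑ j ∈ S, (1 - 2 * (#{t ∈ D | j ≤ t} : ℤ)) := by
      rw [sub_eq_add_neg, ← sum_neg_distrib]
      simp only [neg_sub]
    rw [hexp, T_add, T_sum, map_mul, map_prod, mul_assoc, prod_mul_distrib, prod_const]
  calc _ = Polynomial.C (T m) * ∏ j ∈ D, (1 + f #{t ∈ D | j ≤ t}) := by
        simp only [hterm, ← mul_sum, prod_one_add]
    _ = _ := by
        have hshift : ∀ i : ℕ, 1 - 2 * ((i + 1 : ℕ) : ℤ) = -(2 * (i : ℤ) + 1) := fun i => by
          push_cast; ring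
        simp only [prod_card_filter_le_eq_prod_range D (fun r => 1 + f r), f, hshift]

end LaurentPolynomial

theorem stmt10 (n : ℕ) :
    ∑ k ∈ Finset.range (n + 1),
        Polynomial.C (BfmajPoly n k) * Polynomial.X ^ k =
      ∑ π : SignedPerm n,
        Polynomial.C (T (fmajB π : ℤ) : LaurentPolynomial ℤ) *
          ∏ i ∈ Finset.range (desB π),
            (1 + Polynomial.C (T (-(2 * (i : ℤ) + 1)) : LaurentPolynomial ℤ) * Polynomial.X) := by
  have hdes : ∀ π : SignedPerm n, #(desSetB π) ≤ n := fun π =>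
    (card_filter_le _ _).trans (card_range n).le
  calc _ = ∑ π : SignedPerm n, ∑ k ∈ range (n + 1), ∑ S ∈ (desSetB π).powersetCard k,
          Polynomial.C (T (fmajStar π S)) * Polynomial.X ^ k := by
        simp only [BfmajPoly, map_sum, sum_mul]
        exact sum_comm
    _ = ∑ π : SignedPerm n, ∑ S ∈ (desSetB π).powerset,
          Polynomial.C (T (fmajStar π S)) * Polynomial.X ^ #S :=
        sum_congr rfl fun π _ => sum_range_sum_powersetCard_of_card_le (hdes π) _
    _ = _ := sum_congr rfl fun π _ => sum_powerset_C_T_mul_X_pow (desSetB π) (fmajB π)
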